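/- Let R > 0, let k_c : [0,R]×[0,R] → ℝ be continuous and symmetric (k_c(x,y) = k_c(y,x)), and let u : [0,R] → ℝ be continuous. Then ∫_0^R x · Q^R_c(u)(x) dx = 0, i.e. the truncated coagulation operator (in which a polymer of size x cannot coagulate with a polymer of size greater than R−x) exactly conserves the total mass on [0,R]. -/

import Mathlib

open MeasureTheory

/-- The truncated coagulation operator
`Q^R_c(u)(x) = (1/2)∫_0^x k_c(y,x−y) u(y) u(x−y) dy − u(x) ∫_0^{R−x} k_c(x,y) u(y) dy`. -/
noncomputable def QcR (R : ℝ) (kc : ℝ → ℝ → ℝ) (u : ℝ → ℝ) (x : ℝ) : ℝ :=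
  (1 / 2) * (∫ y in (0:ℝ)..x, kc y (x - y) * u y * u (x - y))
    - u x * ∫ y in (0:ℝ)..(R - x), kc x y * u y

/-!
The substitution `z = x - y` turns the gain part of `∫ x Q(u)(x) dx` into
`(1/2) ∬_{y+z ≤ R} (y + z) k(y,z) u(y) u(z)`, and since the simplex `y + z ≤ R` and `k` are
symmetric under `y ↔ z`, this equals `∬_{y+z ≤ R} y k(y,z) u(y) u(z)`, which is exactly the
loss part. Continuity on `[0,R]` suffices: composing `k` and `u` with the projection onto `[0,R]`
changes nothing on `[0,R]` and makes them continuous everywhere.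
-/

open Set Function intervalIntegral

section Simplex

variable {E : Type*} [NormedAddCommGroup E] [NormedSpace ℝ E]

theorem intervalIntegral_indicator_ge {a b c : ℝ} (h : c ∈ Icc a b) (f : ℝ → E) :
    ∫ x in a..b, {x | c ≤ x}.indicator f x = ∫ x in c..b, f x := by
  calc ∫ x in a..b, {x | c ≤ x}.indicator f x
      = ∫ x in -b..-a, {x | x ≤ -c}.indicator (fun t => f (-t)) x := by
        rw [← integral_comp_neg]
        simp [indicator_apply, neg_le_neg_iff]
    _ = ∫ x in -b..-c, f (-x) := integral_indicator ⟨neg_le_neg h.2, neg_le_neg h.1⟩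
    _ = ∫ x in c..b, f x := by simp only [integral_comp_neg, neg_neg]

theorem integral_integral_triangle_swap [CompleteSpace E] {R : ℝ} (hR : 0 ≤ R)
    {g : ℝ → ℝ → E} (hg : Continuous (uncurry g)) :
    ∫ x in (0:ℝ)..R, ∫ y in (0:ℝ)..x, g x y = ∫ y in (0:ℝ)..R, ∫ x in y..R, g x y := by
  have hint : IntegrableOn (uncurry fun x y => if y ≤ x then g x y else 0)
      (uIoc 0 R ×ˢ uIoc 0 R) := by
    have hS : MeasurableSet {p : ℝ × ℝ | p.2 ≤ p.1} :=
      measurableSet_le measurable_snd measurable_fst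
    refine (((hg.continuousOn.integrableOn_compact (isCompact_Icc.prod isCompact_Icc)).mono_set
      (prod_mono Ioc_subset_Icc_self Ioc_subset_Icc_self)).indicator hS).congr_fun
      (fun p _ => by simp only [indicator_apply]; rfl)
      (measurableSet_uIoc.prod measurableSet_uIoc)
  calc ∫ x in (0:ℝ)..R, ∫ y in (0:ℝ)..x, g x y
      = ∫ x in (0:ℝ)..R, ∫ y in (0:ℝ)..R, if y ≤ x then g x y else 0 :=
        integral_congr fun x hx =>
          (intervalIntegral.integral_indicator (by rwa [uIcc_of_le hR] at hx)).symm
    _ = ∫ y in (0:ℝ)..R, ∫ x in (0:ℝ)..R, if y ≤ x then g x y else 0 :=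
        intervalIntegral_intervalIntegral_swap hint
    _ = ∫ y in (0:ℝ)..R, ∫ x in y..R, g x y :=
        integral_congr fun y hy =>
          intervalIntegral_indicator_ge (by rwa [uIcc_of_le hR] at hy) _

theorem integral_integral_sub_eq_integral_simplex [CompleteSpace E] {R : ℝ} (hR : 0 ≤ R)
    {f : ℝ → ℝ → E} (hf : Continuous (uncurry f)) :
    ∫ x in (0:ℝ)..R, ∫ y in (0:ℝ)..x, f y (x - y)
      = ∫ y in (0:ℝ)..R, ∫ z in (0:ℝ)..(R - y), f y z := by
  rw [integral_integral_triangle_swap hR (g := fun x y => f y (x - y)) (by fun_prop)]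
  simp only [integral_comp_sub_right (f _), sub_self]

theorem integral_simplex_comm [CompleteSpace E] {R : ℝ} (hR : 0 ≤ R)
    {f : ℝ → ℝ → E} (hf : Continuous (uncurry f)) :
    ∫ y in (0:ℝ)..R, ∫ z in (0:ℝ)..(R - y), f z y
      = ∫ y in (0:ℝ)..R, ∫ z in (0:ℝ)..(R - y), f y z := by
  rw [← integral_integral_sub_eq_integral_simplex hR hf,
    ← integral_integral_sub_eq_integral_simplex hR (f := fun y z => f z y) (by fun_prop)]
  refine integral_congr fun x _ => ?_
  simpa using integral_comp_sub_left (a := 0) (b := x) (fun y => f y (x - y)) x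

end Simplex

theorem integral_mul_QcR_eq_zero {R : ℝ} (hR : 0 ≤ R) {K : ℝ → ℝ → ℝ} {U : ℝ → ℝ}
    (hK : Continuous (uncurry K)) (hK_symm : ∀ x y, K x y = K y x) (hU : Continuous U) :
    ∫ x in (0:ℝ)..R, x * QcR R K U x = 0 := by
  set f : ℝ → ℝ → ℝ := fun y z => y * U y * (K y z * U z) with hf_def
  have hf : Continuous (uncurry f) := by fun_prop
  have hQ : ∀ x, x * QcR R K U x
      = 1 / 2 * (∫ y in (0:ℝ)..x, (f y (x - y) + f (x - y) y))
        - ∫ y in (0:ℝ)..(R - x), f x y := by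
    intro x
    have hsymm : ∀ y, f y (x - y) + f (x - y) y = x * (K y (x - y) * U y * U (x - y)) := by
      intro y
      simp only [hf_def, hK_symm (x - y) y]
      ring
    rw [integral_congr fun y _ => hsymm y]
    simp only [hf_def, intervalIntegral.integral_const_mul, QcR]
    ring
  have hf_int : ∀ y, IntervalIntegrable (f y) volume 0 (R - y) := fun y =>
    (hf.comp (Continuous.prodMk_right y)).intervalIntegrable _ _
  have hf_swap_int : ∀ y, IntervalIntegrable (f · y) volume 0 (R - y) := fun y =>
    (hf.comp (Continuous.prodMk_left y)).intervalIntegrable _ _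
  have hconv : Continuous fun x => ∫ y in (0:ℝ)..x, (f y (x - y) + f (x - y) y) :=
    continuous_parametric_intervalIntegral_of_continuous (by fun_prop) continuous_id
  have hloss : Continuous fun x => ∫ y in (0:ℝ)..(R - x), f x y :=
    continuous_parametric_intervalIntegral_of_continuous hf (by fun_prop)
  calc ∫ x in (0:ℝ)..R, x * QcR R K U x
      = 1 / 2 * (∫ x in (0:ℝ)..R, ∫ y in (0:ℝ)..x, (f y (x - y) + f (x - y) y))
          - ∫ x in (0:ℝ)..R, ∫ y in (0:ℝ)..(R - x), f x y := by
        simp only [hQ]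
        rw [integral_sub ((hconv.const_mul _).intervalIntegrable _ _)
            (hloss.intervalIntegrable _ _),
          intervalIntegral.integral_const_mul]
    _ = 1 / 2 * ((∫ y in (0:ℝ)..R, ∫ z in (0:ℝ)..(R - y), f y z)
          + ∫ y in (0:ℝ)..R, ∫ z in (0:ℝ)..(R - y), f z y)
          - ∫ x in (0:ℝ)..R, ∫ y in (0:ℝ)..(R - x), f x y := by
        have hsplit : ∫ y in (0:ℝ)..R, ∫ z in (0:ℝ)..(R - y), (f y z + f z y)
            = (∫ y in (0:ℝ)..R, ∫ z in (0:ℝ)..(R - y), f y z)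
              + ∫ y in (0:ℝ)..R, ∫ z in (0:ℝ)..(R - y), f z y := by
          rw [integral_congr fun y _ => integral_add (hf_int y) (hf_swap_int y)]
          exact integral_add (hloss.intervalIntegrable _ _)
            ((continuous_parametric_intervalIntegral_of_continuous (f := fun y z => f z y)
              (by fun_prop) (by fun_prop)).intervalIntegrable _ _)
        rw [integral_integral_sub_eq_integral_simplex hR (f := fun y z => f y z + f z y)
          (by fun_prop), hsplit]
    _ = 0 := by
        rw [integral_simplex_comm hR hf]
        ring

theorem QcR_congr {R : ℝ} {kc K : ℝ → ℝ → ℝ} {u U : ℝ → ℝ}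
    (hk : ∀ a ∈ Icc 0 R, ∀ b ∈ Icc 0 R, kc a b = K a b) (hu : EqOn u U (Icc 0 R))
    {x : ℝ} (hx : x ∈ Icc 0 R) : QcR R kc u x = QcR R K U x := by
  have hgain : ∀ y ∈ uIcc 0 x,
      kc y (x - y) * u y * u (x - y) = K y (x - y) * U y * U (x - y) := by
    intro y hy
    rw [uIcc_of_le hx.1] at hy
    have hy' : y ∈ Icc 0 R := ⟨hy.1, hy.2.trans hx.2⟩
    have hxy : x - y ∈ Icc 0 R := ⟨by linarith [hy.2], by linarith [hy.1, hx.2]⟩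
    rw [hk _ hy' _ hxy, hu hy', hu hxy]
  have hloss : ∀ y ∈ uIcc 0 (R - x), kc x y * u y = K x y * U y := by
    intro y hy
    rw [uIcc_of_le (by linarith [hx.2])] at hy
    have hy' : y ∈ Icc 0 R := ⟨hy.1, by linarith [hy.2, hx.1]⟩
    rw [hk _ hx _ hy', hu hy']
  rw [QcR, QcR, integral_congr hgain, integral_congr hloss, hu hx]

/-- the truncated coagulation operator exactly conserves the total mass
on `[0,R]`. -/
theorem truncated_coagulation_mass_conservation
    (R : ℝ) (hR : 0 < R) (kc : ℝ → ℝ → ℝ) (u : ℝ → ℝ)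
    (hkc_cont : ContinuousOn (fun p : ℝ × ℝ => kc p.1 p.2) (Set.Icc 0 R ×ˢ Set.Icc 0 R))
    (hkc_symm : ∀ x ∈ Set.Icc (0:ℝ) R, ∀ y ∈ Set.Icc (0:ℝ) R, kc x y = kc y x)
    (hu_cont : ContinuousOn u (Set.Icc 0 R)) :
    ∫ x in (0:ℝ)..R, x * QcR R kc u x = 0 := by
  set π : ℝ → ℝ := fun t => projIcc 0 R hR.le t
  have hπ : Continuous π := continuous_subtype_val.comp continuous_projIcc
  have hπ_mem : ∀ t, π t ∈ Icc 0 R := fun t => (projIcc 0 R hR.le t).2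
  have hπ_id : ∀ t ∈ Icc 0 R, π t = t := fun t ht =>
    congrArg Subtype.val (projIcc_of_mem _ ht)
  have hQ : ∀ x ∈ uIcc 0 R,
      x * QcR R kc u x = x * QcR R (fun a b => kc (π a) (π b)) (u ∘ π) x := by
    intro x hx
    rw [uIcc_of_le hR.le] at hx
    rw [QcR_congr (K := fun a b => kc (π a) (π b)) (U := u ∘ π)
      (fun a ha b hb => by simp only [hπ_id a ha, hπ_id b hb])
      (fun t ht => by simp only [comp_apply, hπ_id t ht]) hx]
  rw [integral_congr hQ]
  refine integral_mul_QcR_eq_zero hR.le ?_ (fun a b => hkc_symm _ (hπ_mem a) _ (hπ_mem b))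
    (hu_cont.comp_continuous hπ hπ_mem)
  exact hkc_cont.comp_continuous (hπ.prodMap hπ) fun p => ⟨hπ_mem p.1, hπ_mem p.2⟩
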